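/- There exist sets A ≠ B such that F(n, A) = F(n, B) for every natural number n. Concretely, let S(n) = { Z(i) | i < n } (the set of Zermelo naturals below n), let A = { S(n) | n ∈ ℕ }, let N = { Z(i) | i ∈ ℕ }, and let B = A ∪ {N}; then A ≠ B but F(n, A) = F(n, B) for all n. -/
import Mathlib

open ZFSet

/-- The approximation function: `F 0 A = ∅`, `F (n+1) A = {F n x | x ∈ A}`. -/
noncomputable def F : ℕ → ZFSet → ZFSet
  | 0, _ => ∅
  | n + 1, A => @ZFSet.image (F n) (Classical.allZFSetDefinable fun s => F n (s 0)) A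

/-- Zermelo numerals: `Z 0 = ∅`, `Z (n+1) = {Z n}`. -/
noncomputable def Z : ℕ → ZFSet
  | 0 => ∅
  | n + 1 => {Z n}

/-- `S n` is the set of Zermelo naturals below `n`. -/
noncomputable def S (n : ℕ) : ZFSet := ZFSet.range (fun i : Fin n => Z i)

lemma mem_F_succ {n : ℕ} {A y : ZFSet} :
    y ∈ F (n + 1) A ↔ ∃ z ∈ A, F n z = y :=
  @ZFSet.mem_image (F n) (Classical.allZFSetDefinable fun s => F n (s 0)) A y

lemma Z_inj : Function.Injective Z := by
  intro m n h
  induction m generalizing n with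
  | zero =>
    cases n with
    | zero => rfl
    | succ n =>
      exfalso
      have : Z n ∈ Z 0 := by rw [h]; simp only [Z]; exact ZFSet.mem_singleton.2 rfl
      simp only [Z] at this
      exact ZFSet.notMem_empty _ this
  | succ m ih =>
    cases n with
    | zero =>
      exfalso
      have : Z m ∈ Z 0 := by rw [← h]; simp only [Z]; exact ZFSet.mem_singleton.2 rfl
      simp only [Z] at this
      exact ZFSet.notMem_empty _ this
    | succ n =>
      simp only [Z] at h
      have : Z m ∈ ({Z n} : ZFSet) := h ▸ ZFSet.mem_singleton.2 rfl
      rw [ih (ZFSet.mem_singleton.1 this)]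

lemma mem_S {n : ℕ} {x : ZFSet} : x ∈ S n ↔ ∃ i < n, Z i = x := by
  simp only [S, ZFSet.mem_range, Set.mem_range]
  constructor
  · rintro ⟨⟨i, hi⟩, rfl⟩; exact ⟨i, hi, rfl⟩
  · rintro ⟨i, hi, rfl⟩; exact ⟨⟨i, hi⟩, rfl⟩

lemma F_Z (n k : ℕ) : F n (Z k) = Z (min n k) := by
  induction n generalizing k with
  | zero => simp [F, Z]
  | succ n ih =>
    cases k with
    | zero =>
      simp only [Nat.min_zero]
      have : Z 0 = (∅ : ZFSet) := rfl
      rw [this]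
      apply ZFSet.ext
      intro y
      simp [mem_F_succ, ZFSet.notMem_empty]
    | succ k =>
      rw [Nat.succ_min_succ]
      apply ZFSet.ext
      intro y
      rw [mem_F_succ]
      simp only [Z, ZFSet.mem_singleton]
      constructor
      · rintro ⟨z, rfl, rfl⟩; exact (ih k).symm ▸ rfl
      · rintro rfl; exact ⟨Z k, rfl, ih k⟩

lemma F_S (n m : ℕ) : F n (S m) = S (min n m) := by
  cases n with
  | zero =>
    apply ZFSet.ext; intro y
    simp [F, mem_S, ZFSet.notMem_empty]
  | succ n =>
    apply ZFSet.ext; intro y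
    rw [mem_F_succ, mem_S]
    constructor
    · rintro ⟨z, hz, rfl⟩
      obtain ⟨i, hi, rfl⟩ := mem_S.1 hz
      exact ⟨min n i, by omega, (F_Z n i).symm⟩
    · rintro ⟨i, hi, rfl⟩
      exact ⟨Z i, mem_S.2 ⟨i, by omega, rfl⟩, by rw [F_Z]; congr 1; omega⟩

lemma F_N (n : ℕ) : F n (ZFSet.range Z) = S n := by
  cases n with
  | zero =>
    apply ZFSet.ext; intro y
    simp [F, mem_S, ZFSet.notMem_empty]
  | succ n =>
    apply ZFSet.ext; intro y
    rw [mem_F_succ, mem_S]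
    constructor
    · rintro ⟨z, hz, rfl⟩
      obtain ⟨i, rfl⟩ := Set.mem_range.1 (ZFSet.mem_range.1 hz)
      exact ⟨min n i, by omega, (F_Z n i).symm⟩
    · rintro ⟨i, hi, rfl⟩
      exact ⟨Z i, ZFSet.mem_range.2 ⟨i, rfl⟩, by rw [F_Z]; congr 1; omega⟩

theorem stmt_13 :
    ZFSet.range S ≠ ZFSet.range S ∪ {ZFSet.range Z} ∧
    ∀ n : ℕ, F n (ZFSet.range S) = F n (ZFSet.range S ∪ {ZFSet.range Z}) := by
  constructor
  · intro h
    have hN : ZFSet.range Z ∈ ZFSet.range S := by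
      rw [h]
      exact ZFSet.mem_union.2 (Or.inr (ZFSet.mem_singleton.2 rfl))
    obtain ⟨m, hm⟩ := Set.mem_range.1 (ZFSet.mem_range.1 hN)
    have : Z m ∈ S m := by
      rw [hm]; exact ZFSet.mem_range.2 ⟨m, rfl⟩
    obtain ⟨i, hi, hZ⟩ := mem_S.1 this
    exact absurd (Z_inj hZ) (by omega)
  · intro n
    cases n with
    | zero => rfl
    | succ n =>
      apply ZFSet.ext; intro y
      rw [mem_F_succ, mem_F_succ]
      constructor
      · rintro ⟨z, hz, rfl⟩
        exact ⟨z, ZFSet.mem_union.2 (Or.inl hz), rfl⟩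
      · rintro ⟨z, hz, rfl⟩
        rcases ZFSet.mem_union.1 hz with hz | hz
        · exact ⟨z, hz, rfl⟩
        · rw [ZFSet.mem_singleton.1 hz]
          refine ⟨S n, ZFSet.mem_range.2 ⟨n, rfl⟩, ?_⟩
          rw [F_S, F_N]; congr 1; omega
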